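/- arXiv:2007.04063 — 4 statements merged into one kernel-verified Lean document; each statement's English description precedes it below -/
import Mathlib

section
/- Let U1 > 2U2 > 0, ε > 0, l2* = U2/ε + δ with 0 < δ < 1, and H(l1, l2) := U1·l2 + U2·l1 − ε·l1·l2. Then H(2l2* − 2, l2*) > H(2l2* − 3, l2* − 1). -/
/-- `H(2l2*−2, l2*) > H(2l2*−3, l2*−1)` in the strongly
anisotropic regime. -/
theorem one_domino_exceeds_two_domino
    (U1 U2 ε δ l2star : ℝ)
    (hU : U1 > 2 * U2) (hU2 : U2 > 0) (hε : ε > 0)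
    (hl2star : l2star = U2 / ε + δ) (hδ0 : 0 < δ) (hδ1 : δ < 1)
    (H : ℝ → ℝ → ℝ) (hH : ∀ l1 l2, H l1 l2 = U1 * l2 + U2 * l1 - ε * l1 * l2) :
    H (2 * l2star - 2) l2star > H (2 * l2star - 3) (l2star - 1) := by
  rw [hH, hH]
  have hεL : ε * l2star = U2 + ε * δ := by
    rw [hl2star]; field_simp
  nlinarith [hεL, mul_pos hε hδ0, mul_pos hε (sub_pos.mpr hδ1)]
end

section
/- Let U1 ≥ U2 > 0, Δ ∈ (U1, U1+U2), ε = U1 + U2 − Δ, l2* = U2/ε + δ with 0 < δ < 1, and H(l1, l2) := U1·l2 + U2·l1 − ε·l1·l2. Then H(2l2* − 2, l2* − 1) + Δ + U1 − ε·(l2* − 1) > H(2l2* − 2, l2*) + 2Δ − U1. -/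
/-- the column-to-row maximum from the quasi-domino exceeds the
add-column maximum from the 1-domino rectangle. -/
theorem quasi_domino_column_to_row_max
    (U1 U2 Δ ε δ l2star : ℝ)
    (hU : U1 ≥ U2) (hU2 : U2 > 0) (hΔ1 : U1 < Δ) (hΔ2 : Δ < U1 + U2)
    (hε : ε = U1 + U2 - Δ)
    (hl2star : l2star = U2 / ε + δ) (hδ0 : 0 < δ) (hδ1 : δ < 1)
    (H : ℝ → ℝ → ℝ) (hH : ∀ l1 l2, H l1 l2 = U1 * l2 + U2 * l1 - ε * l1 * l2) :
    H (2 * l2star - 2) (l2star - 1) + Δ + U1 - ε * (l2star - 1) >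
      H (2 * l2star - 2) l2star + 2 * Δ - U1 := by
  have hεpos : ε > 0 := by rw [hε]; linarith
  have hkey : ε * l2star = U2 + ε * δ := by
    rw [hl2star]; field_simp
  rw [hH, hH]
  nlinarith [hεpos, hδ0, hkey]
end

section
/- Let U1 ≥ U2 > 0, ε > 0, l2* = U2/ε + δ with 0 < δ < 1, H(l1, l2) := U1·l2 + U2·l1 − ε·l1·l2, and Γ := H(2l2* − 2, l2*) + ε·(l2* − 1) + (U1 + U2 − ε). Then for every integer k ≥ 0: H(2l2* + k − 1, l2*) + ε·(2l2* + k − 2) + U1 ≥ Γ, with equality if and only if k = 0. -/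
/-- Case II.A estimate with equality exactly at `k = 0`
(the critical set `P1`). -/
theorem caseIIA_ge_gamma_eq_iff
    (U1 U2 Δ ε δ l2star Γ : ℝ)
    (hU : U1 ≥ U2) (hU2 : U2 > 0) (hε0 : 0 < ε)
    (hΔ : Δ = U1 + U2 - ε)
    (hl2star : l2star = U2 / ε + δ) (hδ0 : 0 < δ) (hδ1 : δ < 1)
    (H : ℝ → ℝ → ℝ) (hH : ∀ l1 l2, H l1 l2 = U1 * l2 + U2 * l1 - ε * l1 * l2)
    (hΓ : Γ = H (2 * l2star - 2) l2star + ε * (l2star - 1) + (U1 + U2 - ε)) :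
    ∀ k : ℤ, 0 ≤ k →
      (H (2 * l2star + (k : ℝ) - 1) l2star + ε * (2 * l2star + (k : ℝ) - 2) + U1 ≥ Γ ∧
        (H (2 * l2star + (k : ℝ) - 1) l2star + ε * (2 * l2star + (k : ℝ) - 2) + U1 = Γ ↔
          k = 0)) := by
  intro k hk
  have hεl2 : ε * l2star = U2 + ε * δ := by
    rw [hl2star]; field_simp
  have key : H (2 * l2star + (k : ℝ) - 1) l2star + ε * (2 * l2star + (k : ℝ) - 2) + U1 - Γ
      = (k : ℝ) * (ε * (1 - δ)) := by
    rw [hΓ, hH, hH]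
    linear_combination (-(k:ℝ)) * hεl2
  have hk0 : (0 : ℝ) ≤ (k : ℝ) := by exact_mod_cast hk
  have hpos : 0 < ε * (1 - δ) := by nlinarith
  constructor
  · nlinarith
  · constructor
    · intro h
      have : (k : ℝ) * (ε * (1 - δ)) = 0 := by linarith
      have : (k : ℝ) = 0 := by
        rcases mul_eq_zero.1 this with h' | h'
        · exact h'
        · linarith
      exact_mod_cast this
    · intro h; subst h; simp at key ⊢; linarith
end

section
/- Let U1 > 2U2 > 0, 0 < ε ≤ U2/100, Δ = U1 + U2 − ε, l2* = U2/ε + δ with 0 < δ < 1, H(l1,l2) := U1 l2 + U2 l1 − ε l1 l2, and Γ := H(2l2*−2, l2*) + ε(l2*−1) + Δ. Then for every integer k ≥ 1: H(2l2* + k − 2, l2* − 1) + 2Δ > Γ. -/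
/-- configurations with circumscribed rectangle
`R(2l2*+k−2, l2*−1)`, `k ≥ 1`, with two free particles lie strictly above `Γ`. -/
theorem two_free_particles_above_gamma
    (U1 U2 Δ ε δ l2star Γ : ℝ)
    (hU : U1 > 2 * U2) (hU2 : U2 > 0) (hε0 : 0 < ε) (hεsmall : ε ≤ U2 / 100)
    (hΔ : Δ = U1 + U2 - ε)
    (hl2star : l2star = U2 / ε + δ) (hδ0 : 0 < δ) (hδ1 : δ < 1)
    (H : ℝ → ℝ → ℝ) (hH : ∀ l1 l2, H l1 l2 = U1 * l2 + U2 * l1 - ε * l1 * l2)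
    (hΓ : Γ = H (2 * l2star - 2) l2star + ε * (l2star - 1) + Δ) :
    ∀ k : ℤ, 1 ≤ k →
      H (2 * l2star + (k : ℝ) - 2) (l2star - 1) + 2 * Δ > Γ := by
  intro k hk
  have hk' : (1 : ℝ) ≤ (k : ℝ) := by exact_mod_cast hk
  have hεb : ε * l2star = U2 + ε * δ := by
    rw [hl2star]; field_simp
  rw [hΓ, hH, hH, hΔ]
  nlinarith [mul_le_mul_of_nonneg_left hk' (le_of_lt hε0),
    mul_nonneg (le_of_lt hε0) (sub_nonneg.mpr hk'),
    mul_le_mul_of_nonneg_right (sub_nonneg.mpr (le_of_lt hδ1)) (mul_nonneg (le_of_lt hε0) (sub_nonneg.mpr hk'))]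
end
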